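/- For every (y,z,x) and n ≥ 1, ‖K*^n((y,z,x),·) − Π*(·)‖ ≤ ‖ν_{(x,z)} K_{XY}^{n−1}(·) − Π_{XY}(·)‖ ≤ ‖ν_{(x,z)} K†^{(n−1)}(·) − Π(·)‖, where ν_{(x,z)} places X = x a.s. and Y ~ Π_{Y|XZ}(·|x,z). -/

import Mathlib

open MeasureTheory ProbabilityTheory

noncomputable def tvDist {E : Type*} [MeasurableSpace E] (μ ν : Measure E) : ℝ :=
  ⨆ A : {A : Set E // MeasurableSet A}, |(μ A.1).toReal - (ν A.1).toReal|

noncomputable def kpow {E : Type*} [MeasurableSpace E] (P : Kernel E E) : ℕ → Kernel E E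
  | 0 => Kernel.id
  | n + 1 => (kpow P n) ∘ₖ P

/-!
The out-of-order kernel factors as `K* = F ∘ₖ A`, where `A : (y, z, x) ↦ (x, y')` is the
`Y`-update and `F : (x, y) ↦ (y, z', x')` is the `Z`-update followed by the `X`-update, while the
marginal kernel is `K_XY = A ∘ₖ F`. Hence `K*^n = F ∘ₖ K_XY^(n-1) ∘ₖ A`, and `Π* = F ∘ₘ Π_XY`, so
the first inequality is the contraction of total variation under the Markov kernel `F`. The
reordered kernel `K†` projects onto `K_XY` under `(z, x, y) ↦ (x, y)`, so the second inequality is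
the contraction of total variation under this projection.
-/

open scoped ENNReal

section TotalVariation

variable {α β : Type*} [MeasurableSpace α] [MeasurableSpace β] {μ ν : Measure α}

lemma tvDist_comm (μ ν : Measure α) : tvDist μ ν = tvDist ν μ := by
  simp only [tvDist, abs_sub_comm]

lemma abs_sub_le_tvDist [IsFiniteMeasure μ] [IsFiniteMeasure ν] {A : Set α}
    (hA : MeasurableSet A) : |(μ A).toReal - (ν A).toReal| ≤ tvDist μ ν := by
  refine le_ciSup (f := fun B : {A : Set α // MeasurableSet A} => |(μ B.1).toReal - (ν B.1).toReal|)
    ⟨μ.real Set.univ + ν.real Set.univ, ?_⟩ ⟨A, hA⟩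
  rintro _ ⟨B, rfl⟩
  have hμ : μ.real B.1 ≤ μ.real Set.univ := measureReal_mono (Set.subset_univ _)
  have hν : ν.real B.1 ≤ ν.real Set.univ := measureReal_mono (Set.subset_univ _)
  have hμ0 : 0 ≤ μ.real B.1 := measureReal_nonneg
  have hν0 : 0 ≤ ν.real B.1 := measureReal_nonneg
  simp only [← measureReal_def]
  rw [abs_sub_le_iff]
  constructor <;> linarith

-- `∫⁻ f ∂μ - ∫⁻ f ∂ν ≤ μ s - ν s` for a Hahn set `s` of `μ - ν`, stated without subtraction.
lemma lintegral_add_le_of_hahn {s : Set α} (hs : MeasurableSet s)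
    (hνμ : ∀ t, MeasurableSet t → t ⊆ s → ν t ≤ μ t)
    (hμν : ∀ t, MeasurableSet t → t ⊆ sᶜ → μ t ≤ ν t)
    {f : α → ℝ≥0∞} (hf : Measurable f) (hf1 : ∀ a, f a ≤ 1) :
    ∫⁻ a, f a ∂μ + ν s ≤ ∫⁻ a, f a ∂ν + μ s := by
  have restrict_le {ρ ρ' : Measure α} {u : Set α} (hu : MeasurableSet u)
      (h : ∀ t, MeasurableSet t → t ⊆ u → ρ t ≤ ρ' t) : ρ.restrict u ≤ ρ'.restrict u :=
    Measure.le_iff.2 fun t ht => by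
      rw [Measure.restrict_apply ht, Measure.restrict_apply ht]
      exact h _ (ht.inter hu) Set.inter_subset_right
  have split (ρ : Measure α) : ∫⁻ a, f a ∂ρ = ∫⁻ a in s, f a ∂ρ + ∫⁻ a in sᶜ, f a ∂ρ :=
    (lintegral_add_compl f hs).symm
  have split_set (ρ : Measure α) : ρ s = ∫⁻ a in s, f a ∂ρ + ∫⁻ a in s, (1 - f a) ∂ρ := by
    rw [← lintegral_add_left hf, ← setLIntegral_one]
    exact setLIntegral_congr_fun hs fun a _ => (add_tsub_cancel_of_le (hf1 a)).symm
  have hc : ∫⁻ a in sᶜ, f a ∂μ ≤ ∫⁻ a in sᶜ, f a ∂ν :=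
    lintegral_mono' (restrict_le hs.compl hμν) le_rfl
  have hs' : ∫⁻ a in s, (1 - f a) ∂ν ≤ ∫⁻ a in s, (1 - f a) ∂μ :=
    lintegral_mono' (restrict_le hs hνμ) le_rfl
  calc ∫⁻ a, f a ∂μ + ν s
      = (∫⁻ a in s, f a ∂μ + ∫⁻ a in s, f a ∂ν)
        + (∫⁻ a in sᶜ, f a ∂μ + ∫⁻ a in s, (1 - f a) ∂ν) := by
        rw [split μ, split_set ν]; abel
    _ ≤ (∫⁻ a in s, f a ∂μ + ∫⁻ a in s, f a ∂ν)
        + (∫⁻ a in sᶜ, f a ∂ν + ∫⁻ a in s, (1 - f a) ∂μ) := by gcongr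
    _ = ∫⁻ a, f a ∂ν + μ s := by
        rw [split ν, split_set μ]; abel

lemma toReal_lintegral_sub_le_tvDist [IsFiniteMeasure μ] [IsFiniteMeasure ν]
    {f : α → ℝ≥0∞} (hf : Measurable f) (hf1 : ∀ a, f a ≤ 1) :
    (∫⁻ a, f a ∂μ).toReal - (∫⁻ a, f a ∂ν).toReal ≤ tvDist μ ν := by
  obtain ⟨s, hs, hνμ, hμν⟩ := hahn_decomposition μ ν
  have hfin (ρ : Measure α) [IsFiniteMeasure ρ] : ∫⁻ a, f a ∂ρ ≠ ∞ :=
    ne_top_of_le_ne_top (measure_ne_top ρ Set.univ) <| by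
      simpa using lintegral_mono (μ := ρ) hf1
  have key := ENNReal.toReal_mono (ENNReal.add_ne_top.2 ⟨hfin ν, measure_ne_top μ s⟩)
    (lintegral_add_le_of_hahn hs hνμ hμν hf hf1)
  rw [ENNReal.toReal_add (hfin μ) (measure_ne_top ν s),
    ENNReal.toReal_add (hfin ν) (measure_ne_top μ s)] at key
  linarith [le_abs_self ((μ s).toReal - (ν s).toReal), abs_sub_le_tvDist (μ := μ) (ν := ν) hs]

lemma tvDist_bind_le [IsFiniteMeasure μ] [IsFiniteMeasure ν] (κ : Kernel α β)
    [IsMarkovKernel κ] : tvDist (κ ∘ₘ μ) (κ ∘ₘ ν) ≤ tvDist μ ν := by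
  have : Nonempty {A : Set β // MeasurableSet A} := ⟨⟨∅, .empty⟩⟩
  refine ciSup_le fun A => ?_
  have hf : Measurable fun a => κ a A.1 := κ.measurable_coe A.2
  have hf1 : ∀ a, κ a A.1 ≤ 1 := fun a => prob_le_one
  rw [Measure.bind_apply A.2 κ.aemeasurable, Measure.bind_apply A.2 κ.aemeasurable,
    abs_sub_le_iff]
  exact ⟨toReal_lintegral_sub_le_tvDist hf hf1,
    tvDist_comm ν μ ▸ toReal_lintegral_sub_le_tvDist hf hf1⟩

lemma tvDist_map_le [IsFiniteMeasure μ] [IsFiniteMeasure ν] {g : α → β} (hg : Measurable g) :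
    tvDist (μ.map g) (ν.map g) ≤ tvDist μ ν := by
  simpa only [Measure.deterministic_comp_eq_map hg] using
    tvDist_bind_le (μ := μ) (ν := ν) (Kernel.deterministic g hg)

end TotalVariation

section KernelAlgebra

variable {α β γ : Type*} [MeasurableSpace α] [MeasurableSpace β] [MeasurableSpace γ]

lemma MeasureTheory.Measure.bind_map (μ : Measure α) {g : α → β} (hg : Measurable g)
    {f : β → Measure γ} (hf : Measurable f) : (μ.map g).bind f = μ.bind (f ∘ g) := by
  ext s hs
  rw [Measure.bind_apply hs hf.aemeasurable, Measure.bind_apply hs (hf.comp hg).aemeasurable]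
  exact lintegral_map ((Measure.measurable_coe hs).comp hf) hg

lemma ProbabilityTheory.Kernel.id_prod_apply (κ : Kernel α β) [IsSFiniteKernel κ] (a : α) :
    (Kernel.id ×ₖ κ) a = (κ a).map (Prod.mk a) := by
  rw [Kernel.prod_apply, Kernel.id_apply, Measure.dirac_prod]

lemma ProbabilityTheory.Kernel.map_id_prod_apply (κ : Kernel α β) [IsSFiniteKernel κ]
    {g : α × β → γ} (hg : Measurable g) (a : α) :
    (Kernel.id ×ₖ κ).map g a = (κ a).map fun b => g (a, b) := by
  rw [Kernel.map_apply _ hg, Kernel.id_prod_apply, Measure.map_map hg measurable_prodMk_left]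
  rfl

lemma MeasureTheory.Measure.map_snd_bind_map_prodMk (μ : Measure α) [SFinite μ]
    (κ : Kernel α β) [IsSFiniteKernel κ] :
    (μ.bind fun a => (κ a).map (Prod.mk a)).map Prod.snd = κ ∘ₘ μ := by
  simp_rw [← Kernel.id_prod_apply]
  rw [← Measure.compProd_eq_comp_prod]
  exact Measure.snd_compProd μ κ

end KernelAlgebra

section KernelPower

variable {E E' : Type*} [MeasurableSpace E] [MeasurableSpace E']

instance isMarkovKernel_kpow (K : Kernel E E) [IsMarkovKernel K] (n : ℕ) :
    IsMarkovKernel (kpow K n) := by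
  induction n with
  | zero => rw [kpow]; infer_instance
  | succ n ih => rw [kpow]; infer_instance

lemma kpow_comp_succ (F : Kernel E' E) (A : Kernel E E') (n : ℕ) :
    kpow (F ∘ₖ A) (n + 1) = F ∘ₖ kpow (A ∘ₖ F) n ∘ₖ A := by
  induction n with
  | zero => simp only [kpow, Kernel.id_comp, Kernel.comp_id]
  | succ n ih => rw [kpow, ih, kpow]; simp only [Kernel.comp_assoc]

lemma map_kpow_comp {K : Kernel E E} {L : Kernel E' E'} {f : E → E'} (hf : Measurable f)
    (hKL : ∀ a, (K a).map f = L (f a)) (n : ℕ) (μ : Measure E) :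
    (kpow K n ∘ₘ μ).map f = kpow L n ∘ₘ μ.map f := by
  induction n generalizing μ with
  | zero => simp only [kpow, Measure.id_comp]
  | succ n ih =>
    have hstep : (K ∘ₘ μ).map f = L ∘ₘ μ.map f := by
      rw [Measure.map_comp _ _ hf, Measure.bind_map _ hf L.measurable]
      congr 1
      funext a
      rw [Kernel.map_apply _ hf, hKL, Function.comp_apply]
    rw [kpow, kpow, ← Measure.comp_assoc, ih, hstep, Measure.comp_assoc]

end KernelPower

section GibbsUpdates

variable {X Y Z : Type*} [MeasurableSpace X] [MeasurableSpace Y] [MeasurableSpace Z]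

noncomputable def updateY (PYgXZ : Kernel (X × Z) Y) : Kernel (Y × Z × X) (X × Y) :=
  (Kernel.id ×ₖ PYgXZ.comap (fun p => (p.2.2, p.2.1)) (by fun_prop)).map fun r => (r.1.2.2, r.2)

noncomputable def updateZ (PZgXY : Kernel (X × Y) Z) : Kernel (X × Y) (Y × Z) :=
  (Kernel.id ×ₖ PZgXY).map fun r => (r.1.2, r.2)

noncomputable def updateX (PXgZ : Kernel Z X) : Kernel (Y × Z) (Y × Z × X) :=
  (Kernel.id ×ₖ PXgZ.comap Prod.snd measurable_snd).map fun r => (r.1.1, r.1.2, r.2)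

instance (PYgXZ : Kernel (X × Z) Y) [IsMarkovKernel PYgXZ] : IsMarkovKernel (updateY PYgXZ) :=
  Kernel.IsMarkovKernel.map _ (by fun_prop)

instance (PZgXY : Kernel (X × Y) Z) [IsMarkovKernel PZgXY] : IsMarkovKernel (updateZ PZgXY) :=
  Kernel.IsMarkovKernel.map _ (by fun_prop)

instance (PXgZ : Kernel Z X) [IsMarkovKernel PXgZ] :
    IsMarkovKernel (updateX (Y := Y) PXgZ) :=
  Kernel.IsMarkovKernel.map _ (by fun_prop)

lemma updateY_apply (PYgXZ : Kernel (X × Z) Y) [IsSFiniteKernel PYgXZ] (p : Y × Z × X) :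
    updateY PYgXZ p = (PYgXZ (p.2.2, p.2.1)).map fun y => (p.2.2, y) :=
  Kernel.map_id_prod_apply _ (by fun_prop) p

lemma updateZ_apply (PZgXY : Kernel (X × Y) Z) [IsSFiniteKernel PZgXY] (q : X × Y) :
    updateZ PZgXY q = (PZgXY q).map fun z => (q.2, z) :=
  Kernel.map_id_prod_apply _ (by fun_prop) q

lemma updateX_apply (PXgZ : Kernel Z X) [IsSFiniteKernel PXgZ] (q : Y × Z) :
    updateX PXgZ q = (PXgZ q.2).map fun x => (q.1, q.2, x) :=
  Kernel.map_id_prod_apply _ (by fun_prop) q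

end GibbsUpdates

section GibbsKernels

variable {X Y Z : Type*} [MeasurableSpace X] [MeasurableSpace Y] [MeasurableSpace Z]
  {PXgZ : Kernel Z X} [IsSFiniteKernel PXgZ] {PYgXZ : Kernel (X × Z) Y} [IsSFiniteKernel PYgXZ]
  {PZgXY : Kernel (X × Y) Z} [IsSFiniteKernel PZgXY]

lemma updateY_comp_updateX_comp_updateZ {PXYgZ : Kernel Z (X × Y)}
    (hseq : ∀ z, PXYgZ z = (PXgZ z).bind fun x => (PYgXZ (x, z)).map fun y => (x, y)) :
    updateY PYgXZ ∘ₖ (updateX PXgZ ∘ₖ updateZ PZgXY) = PXYgZ ∘ₖ PZgXY := by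
  refine Kernel.ext fun q => ?_
  have hYX : ∀ u, (updateY PYgXZ ∘ₖ updateX PXgZ) u = PXYgZ u.2 := fun u => by
    rw [Kernel.comp_apply, updateX_apply, Measure.bind_map _ (by fun_prop) (Kernel.measurable _),
      hseq]
    congr 1
    funext x
    exact updateY_apply PYgXZ (u.1, u.2, x)
  rw [← Kernel.comp_assoc, Kernel.comp_apply, updateZ_apply,
    Measure.bind_map _ (by fun_prop) (Kernel.measurable _), Kernel.comp_apply]
  congr 1
  funext z
  exact hYX (q.2, z)

lemma updateX_comp_updateZ_comp_updateY_apply (p : Y × Z × X) :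
    (updateX PXgZ ∘ₖ updateZ PZgXY ∘ₖ updateY PYgXZ) p =
      (PYgXZ (p.2.2, p.2.1)).bind fun y =>
        (PZgXY (p.2.2, y)).bind fun z => (PXgZ z).map fun x => (y, z, x) := by
  rw [Kernel.comp_apply, updateY_apply, Measure.bind_map _ (by fun_prop) (Kernel.measurable _)]
  congr 1
  funext y
  rw [Function.comp_apply, Kernel.comp_apply, updateZ_apply,
    Measure.bind_map _ (by fun_prop) (Kernel.measurable _)]
  congr 1
  funext z
  exact updateX_apply PXgZ (y, z)

lemma updateX_comp_updateZ_comp_map (Pi : Measure (X × Y × Z)) [SFinite Pi]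
    (hZgXY : Pi.map (fun p => ((p.1, p.2.1), p.2.2)) = (Pi.map fun p => (p.1, p.2.1)) ⊗ₘ PZgXY) :
    (updateX PXgZ ∘ₖ updateZ PZgXY) ∘ₘ (Pi.map fun p => (p.1, p.2.1)) =
      (Pi.map fun p => (p.2.1, p.2.2)).bind fun q => (PXgZ q.2).map fun x => (q.1, q.2, x) := by
  have hYZ : updateZ PZgXY ∘ₘ (Pi.map fun p => (p.1, p.2.1)) = Pi.map fun p => (p.2.1, p.2.2) := by
    rw [updateZ, ← Measure.map_comp _ _ (by fun_prop), ← Measure.compProd_eq_comp_prod, ← hZgXY,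
      Measure.map_map (by fun_prop) (by fun_prop)]
    rfl
  rw [← Measure.comp_assoc, hYZ]
  congr 1
  funext q
  exact updateX_apply PXgZ q

end GibbsKernels

theorem Kstar_tv_chain_general
    {X Y Z : Type*} [MeasurableSpace X] [MeasurableSpace Y] [MeasurableSpace Z]
    (Pi : Measure (X × Y × Z)) [IsProbabilityMeasure Pi]
    (PXgZ : Kernel Z X) [IsMarkovKernel PXgZ]
    (PYgXZ : Kernel (X × Z) Y) [IsMarkovKernel PYgXZ]
    (PZgXY : Kernel (X × Y) Z) [IsMarkovKernel PZgXY]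
    (PXYgZ : Kernel Z (X × Y)) [IsMarkovKernel PXYgZ]
    (hZgXY : Pi.map (fun p : X × Y × Z => ((p.1, p.2.1), p.2.2)) = (Pi.map fun p : X × Y × Z => (p.1, p.2.1)) ⊗ₘ PZgXY)
    (hseq : ∀ z : Z, PXYgZ z = (PXgZ z).bind fun x => (PYgXZ (x, z)).map fun y => (x, y))
    (KXY : Kernel (X × Y) (X × Y))
    (hKXY : ∀ q : X × Y, KXY q = (PZgXY q).bind fun z => PXYgZ z)
    (Kd : Kernel (Z × X × Y) (Z × X × Y))
    (hKd : ∀ p : Z × X × Y, Kd p = (PZgXY (p.2.1, p.2.2)).bind fun z' =>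
        (PXYgZ z').map fun q => (z', q.1, q.2))
    (Kstar : Kernel (Y × Z × X) (Y × Z × X))
    (hKstar : ∀ p : Y × Z × X, Kstar p =
      (PYgXZ (p.2.2, p.2.1)).bind fun y' =>
        (PZgXY (p.2.2, y')).bind fun z' =>
          (PXgZ z').map fun x' => (y', z', x'))
    (PiStar : Measure (Y × Z × X))
    (hPiStar : PiStar = (Pi.map fun p : X × Y × Z => (p.2.1, p.2.2)).bind fun q =>
        (PXgZ q.2).map fun x => (q.1, q.2, x))
    :
    ∀ (y : Y) (z : Z) (x : X) (n : ℕ), 1 ≤ n →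
      tvDist ((kpow Kstar n) (y, z, x)) PiStar ≤
          tvDist (((PYgXZ (x, z)).map fun y' => (x, y')).bind fun q => (kpow KXY (n - 1)) q)
            (Pi.map fun p : X × Y × Z => (p.1, p.2.1)) ∧
        tvDist (((PYgXZ (x, z)).map fun y' => (x, y')).bind fun q => (kpow KXY (n - 1)) q)
            (Pi.map fun p : X × Y × Z => (p.1, p.2.1)) ≤
          tvDist (((PYgXZ (x, z)).map fun y' => (z, x, y')).bind fun u => (kpow Kd (n - 1)) u)
            (Pi.map fun p : X × Y × Z => (p.2.2, p.1, p.2.1)) := by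
  intro y z x n hn
  obtain ⟨m, rfl⟩ := Nat.exists_eq_add_of_le' hn
  rw [Nat.add_sub_cancel]
  have hL : KXY = updateY PYgXZ ∘ₖ (updateX PXgZ ∘ₖ updateZ PZgXY) :=
    (Kernel.ext hKXY).trans (updateY_comp_updateX_comp_updateZ hseq).symm
  have hK : Kstar = updateX PXgZ ∘ₖ updateZ PZgXY ∘ₖ updateY PYgXZ :=
    Kernel.ext fun p => (hKstar p).trans (updateX_comp_updateZ_comp_updateY_apply p).symm
  have hKd_snd : ∀ p, (Kd p).map Prod.snd = KXY p.2 := fun p => by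
    rw [hKd, hKXY]
    exact Measure.map_snd_bind_map_prodMk _ PXYgZ
  have : IsMarkovKernel KXY := hL ▸ inferInstance
  have : IsMarkovKernel Kd := ⟨fun p => (Measure.isProbabilityMeasure_map_iff
    measurable_snd.aemeasurable).1 (hKd_snd p ▸ inferInstance)⟩
  refine ⟨?_, ?_⟩
  · rw [hK, kpow_comp_succ, ← hL, Kernel.comp_apply, ← Measure.comp_assoc, updateY_apply,
      hPiStar, ← updateX_comp_updateZ_comp_map Pi hZgXY]
    exact tvDist_bind_le _
  · have hν : ((PYgXZ (x, z)).map fun y' => (z, x, y')).map Prod.snd =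
        (PYgXZ (x, z)).map fun y' => (x, y') := Measure.map_map measurable_snd (by fun_prop)
    have hPi : (Pi.map fun p : X × Y × Z => (p.2.2, p.1, p.2.1)).map Prod.snd =
        Pi.map fun p : X × Y × Z => (p.1, p.2.1) := Measure.map_map measurable_snd (by fun_prop)
    rw [← hν, ← hPi, ← map_kpow_comp measurable_snd hKd_snd]
    exact tvDist_map_le measurable_snd

/-- `‖K*^n((y,z,x),·) − Π*‖ ≤ ‖ν_{(x,z)} K_{XY}^{n-1} − Π_{XY}‖
≤ ‖ν_{(x,z)} K†^{(n-1)} − Π‖` for n ≥ 1. -/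
theorem Kstar_tv_chain
    {X Y Z : Type*} [MeasurableSpace X] [MeasurableSpace Y] [MeasurableSpace Z]
    (Pi : Measure (X × Y × Z)) [IsProbabilityMeasure Pi]
    (PXgZ : Kernel Z X) [IsMarkovKernel PXgZ]
    (PYgXZ : Kernel (X × Z) Y) [IsMarkovKernel PYgXZ]
    (PZgXY : Kernel (X × Y) Z) [IsMarkovKernel PZgXY]
    (PXYgZ : Kernel Z (X × Y)) [IsMarkovKernel PXYgZ]
    (hXgZ : Pi.map (fun p : X × Y × Z => (p.2.2, p.1)) = (Pi.map fun p : X × Y × Z => p.2.2) ⊗ₘ PXgZ)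
    (hYgXZ : Pi.map (fun p : X × Y × Z => ((p.1, p.2.2), p.2.1)) = (Pi.map fun p : X × Y × Z => (p.1, p.2.2)) ⊗ₘ PYgXZ)
    (hZgXY : Pi.map (fun p : X × Y × Z => ((p.1, p.2.1), p.2.2)) = (Pi.map fun p : X × Y × Z => (p.1, p.2.1)) ⊗ₘ PZgXY)
    (hXYgZ : Pi.map (fun p : X × Y × Z => (p.2.2, (p.1, p.2.1))) = (Pi.map fun p : X × Y × Z => p.2.2) ⊗ₘ PXYgZ)
    (hseq : ∀ z : Z, PXYgZ z = (PXgZ z).bind fun x => (PYgXZ (x, z)).map fun y => (x, y))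
    (KXY : Kernel (X × Y) (X × Y))
    (hKXY : ∀ q : X × Y, KXY q = (PZgXY q).bind fun z => PXYgZ z)
    (Kd : Kernel (Z × X × Y) (Z × X × Y))
    (hKd : ∀ p : Z × X × Y, Kd p = (PZgXY (p.2.1, p.2.2)).bind fun z' =>
        (PXYgZ z').map fun q => (z', q.1, q.2))
    (Kstar : Kernel (Y × Z × X) (Y × Z × X))
    (hKstar : ∀ p : Y × Z × X, Kstar p =
      (PYgXZ (p.2.2, p.2.1)).bind fun y' =>
        (PZgXY (p.2.2, y')).bind fun z' =>
          (PXgZ z').map fun x' => (y', z', x'))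
    (PiStar : Measure (Y × Z × X))
    (hPiStar : PiStar = (Pi.map fun p : X × Y × Z => (p.2.1, p.2.2)).bind fun q =>
        (PXgZ q.2).map fun x => (q.1, q.2, x))
    :
    ∀ (y : Y) (z : Z) (x : X) (n : ℕ), 1 ≤ n →
      tvDist ((kpow Kstar n) (y, z, x)) PiStar ≤
          tvDist (((PYgXZ (x, z)).map fun y' => (x, y')).bind fun q => (kpow KXY (n - 1)) q)
            (Pi.map fun p : X × Y × Z => (p.1, p.2.1)) ∧
        tvDist (((PYgXZ (x, z)).map fun y' => (x, y')).bind fun q => (kpow KXY (n - 1)) q)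
            (Pi.map fun p : X × Y × Z => (p.1, p.2.1)) ≤
          tvDist (((PYgXZ (x, z)).map fun y' => (z, x, y')).bind fun u => (kpow Kd (n - 1)) u)
            (Pi.map fun p : X × Y × Z => (p.2.2, p.1, p.2.1)) :=
  Kstar_tv_chain_general Pi PXgZ PYgXZ PZgXY PXYgZ hZgXY hseq KXY hKXY Kd hKd Kstar hKstar PiStar
    hPiStar
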